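/- (Theorem 3.2.) If conditions (3.1), (3.2) and (3.9) hold, then for all sufficiently large x_0, nh ∫_{x_0}^∞ P(x is classified by 𝒜_2 as coming from g) f(x) dx → ∞ as n → ∞. -/

import Mathlib

open MeasureTheory ProbabilityTheory Filter Asymptotics

/-- Kernel density estimator with kernel `K` and bandwidth `bw`, based on the first `M`
of the random variables `X`. -/
noncomputable def kde {Ω : Type*} (K : ℝ → ℝ) (M : ℕ) (bw : ℝ) (X : ℕ → Ω → ℝ)
    (x : ℝ) (ω : Ω) : ℝ :=
  ((M : ℝ) * bw)⁻¹ * ∑ i ∈ Finset.range M, K ((x - X i ω) / bw)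

/-- For estimated densities `F, G` with `F x = G x = 0`, the point `x̂`: the infimum of
those `y ≤ x` such that `F` and `G` vanish identically on `[y, x]`. -/
noncomputable def tailInf (F G : ℝ → ℝ) (x : ℝ) : ℝ :=
  sInf {y : ℝ | y ≤ x ∧ ∀ z ∈ Set.Icc y x, F z = 0 ∧ G z = 0}

/-- The event that `x` is classified as coming from `g` by the combined rule `𝒜₂`,
given estimated densities `F` (for `f`) and `G` (for `g`). -/
def A2ClassG (p : ℝ) (F G : ℝ → ℝ) (x : ℝ) : Prop :=
  (¬(F x = 0 ∧ G x = 0) ∧ p * F x - (1 - p) * G x < 0) ∨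
  ((F x = 0 ∧ G x = 0) ∧ 0 < Function.leftLim G (tailInf F G x))

/- ### Auxiliary lemmas -/

-- the tail rule is vacuous for continuous `F`, `G` at points `x > 0`
lemma HK.tail_vacuous {F G : ℝ → ℝ} (hG : Continuous G) {x : ℝ}
    (hx : 0 < x) (h0 : F x = 0 ∧ G x = 0) : ¬ 0 < Function.leftLim G (tailInf F G x) := by
  set s : Set ℝ := {y : ℝ | y ≤ x ∧ ∀ z ∈ Set.Icc y x, F z = 0 ∧ G z = 0} with hs
  have hxs : x ∈ s := ⟨le_refl x, fun z hz => by
    rcases hz with ⟨h1, h2⟩; have : z = x := le_antisymm h2 h1; subst this; exact h0⟩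
  have hns : s.Nonempty := ⟨x, hxs⟩
  have hGinf : G (sInf s) = 0 := by
    by_cases hb : BddBelow s
    · set y₀ := sInf s with hy₀
      have hy₀x : y₀ ≤ x := csInf_le hb hxs
      have hioc : ∀ z ∈ Set.Ioc y₀ x, F z = 0 ∧ G z = 0 := by
        intro z hz
        obtain ⟨y, hy, hyz⟩ := (csInf_lt_iff hb hns).mp hz.1
        exact hy.2 z ⟨hyz.le, hz.2⟩
      rcases eq_or_lt_of_le hy₀x with heq | hlt
      · rw [heq]; exact h0.2
      · have h1 : Tendsto G (nhdsWithin y₀ (Set.Ioi y₀)) (nhds (G y₀)) :=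
          (hG.tendsto y₀).mono_left nhdsWithin_le_nhds
        have h2 : Tendsto G (nhdsWithin y₀ (Set.Ioi y₀)) (nhds 0) := by
          apply Tendsto.congr' _ tendsto_const_nhds
          filter_upwards [Ioc_mem_nhdsGT_of_mem ⟨le_refl y₀, hlt⟩] with z hz
          exact ((hioc z hz).2).symm
        exact tendsto_nhds_unique h1 h2
    · rw [Real.sInf_of_not_bddBelow hb]
      obtain ⟨y, hy, hy0⟩ : ∃ y ∈ s, y < 0 := by
        by_contra h
        push_neg at h
        exact hb ⟨0, fun y hy => le_of_not_gt fun h' => absurd (h y hy) (not_le.mpr h')⟩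
      exact (hy.2 0 ⟨hy0.le, hx.le⟩).2
  rw [tailInf, ← hs]
  have : Function.leftLim G (sInf s) = G (sInf s) :=
    leftLim_eq_of_tendsto
      ((hG.tendsto _).mono_left nhdsWithin_le_nhds)
  rw [this, hGinf]
  exact lt_irrefl 0

lemma HK.A2_iff {F G : ℝ → ℝ} (hG : Continuous G) {x p : ℝ} (hx : 0 < x) :
    A2ClassG p F G x ↔ (¬(F x = 0 ∧ G x = 0) ∧ p * F x - (1 - p) * G x < 0) := by
  constructor
  · rintro (h | h)
    · exact h
    · exact absurd h.2 (HK.tail_vacuous hG hx h.1)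
  · exact Or.inl

lemma HK.bern_low (n : ℕ) {q : ℝ} (hq0 : 0 ≤ q) (hq1 : q ≤ 1) (hnq : (n : ℝ) * q ≤ 1) :
    (n : ℝ) * q / 2 ≤ 1 - (1 - q) ^ n := by
  have hb : 1 + (n : ℝ) * q ≤ (1 + q) ^ n := by
    have := one_add_mul_le_pow (a := q) (by linarith) n
    linarith [this]
  have hab : (1 - q) ^ n * (1 + q) ^ n ≤ 1 := by
    rw [← mul_pow]
    have h1 : (1 - q) * (1 + q) = 1 - q ^ 2 := by ring
    rw [h1]
    exact pow_le_one₀ (by nlinarith) (by nlinarith)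
  have ha : (0:ℝ) ≤ (1 - q) ^ n := pow_nonneg (by linarith) n
  have haux : (1 - q) ^ n * (1 + (n:ℝ) * q) ≤ 1 :=
    le_trans (mul_le_mul_of_nonneg_left hb ha) hab
  nlinarith [haux, mul_nonneg (mul_nonneg (Nat.cast_nonneg n) hq0) (sub_nonneg.mpr hnq)]

lemma HK.bern_up (n : ℕ) {r : ℝ} (hr1 : r ≤ 1) : 1 - (n : ℝ) * r ≤ (1 - r) ^ n := by
  have := one_add_mul_le_pow (a := -r) (by linarith) n
  have h2 : (1 + -r) ^ n = (1 - r) ^ n := by ring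
  linarith [this, h2]

lemma HK.kde_cont {Ω : Type*} {K : ℝ → ℝ} (hK : Continuous K) (M : ℕ) (bw : ℝ)
    (X : ℕ → Ω → ℝ) (ω : Ω) : Continuous fun x => kde K M bw X x ω := by
  unfold kde
  exact continuous_const.mul (continuous_finset_sum _ fun i _ =>
    hK.comp ((continuous_id.sub continuous_const).div_const bw))

lemma HK.kde_jmeas {Ω : Type*} [MeasurableSpace Ω] {K : ℝ → ℝ} (hK : Measurable K) (M : ℕ)
    (bw : ℝ) {X : ℕ → Ω → ℝ} (hX : ∀ i, Measurable (X i)) :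
    Measurable fun q : ℝ × Ω => kde K M bw X q.1 q.2 := by
  unfold kde
  exact measurable_const.mul (Finset.measurable_sum _ fun i _ =>
    hK.comp ((measurable_fst.sub ((hX i).comp measurable_snd)).div_const bw))

lemma HK.kde_zero {Ω : Type*} {K : ℝ → ℝ} {S : ℝ} (hK : ∀ u, S < |u| → K u = 0) {M : ℕ}
    {bw : ℝ} (hbw : 0 < bw) {X : ℕ → Ω → ℝ} {x : ℝ} {ω : Ω}
    (h : ∀ i < M, S * bw < |x - X i ω|) : kde K M bw X x ω = 0 := by
  unfold kde
  rw [Finset.sum_eq_zero, mul_zero]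
  intro i hi
  apply hK
  rw [abs_div, abs_of_pos hbw, lt_div_iff₀ hbw]
  exact h i (Finset.mem_range.mp hi)

lemma HK.kde_pos {Ω : Type*} {K : ℝ → ℝ} (hK0 : ∀ u, 0 ≤ K u) {M : ℕ} {bw : ℝ}
    (hM : 0 < M) (hbw : 0 < bw) {X : ℕ → Ω → ℝ} {x : ℝ} {ω : Ω}
    {j : ℕ} (hj : j < M) {κ : ℝ} (hκ : 0 < κ) (hKj : κ ≤ K ((x - X j ω) / bw)) :
    0 < kde K M bw X x ω := by
  unfold kde
  apply mul_pos (by positivity)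
  have hpos : (0:ℝ) < K ((x - X j ω) / bw) := lt_of_lt_of_le hκ hKj
  refine Finset.sum_pos' (fun i _ => hK0 _) ⟨j, Finset.mem_range.mpr hj, ?_⟩
  exact hpos

lemma HK.indep_prod {Ω : Type*} [MeasurableSpace Ω] (P : Measure Ω) {M N : ℕ}
    {X : Fin M → Ω → ℝ} {Y : Fin N → Ω → ℝ}
    (h : iIndepFun (Sum.elim X Y) P) {B C : Set ℝ}
    (hB : MeasurableSet B) (hC : MeasurableSet C) :
    P ((⋂ i, X i ⁻¹' B) ∩ ⋂ j, Y j ⁻¹' C) =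
      (∏ i, P (X i ⁻¹' B)) * ∏ j, P (Y j ⁻¹' C) := by
  have key := h.measure_inter_preimage_eq_mul Finset.univ
    (sets := Sum.elim (fun _ => B) (fun _ => C))
    (fun k _ => by cases k <;> simpa)
  simp only [Finset.mem_univ, Set.iInter_true] at key
  rw [Fintype.prod_sum_type (f := fun k : Fin M ⊕ Fin N =>
    P (Sum.elim X Y k ⁻¹' Sum.elim (fun _ => B) (fun _ => C) k))] at key
  simp only [Sum.elim_inl, Sum.elim_inr] at key
  rw [← key]
  congr 1
  ext ω
  simp only [Set.mem_iInter, Set.mem_inter_iff, Set.mem_preimage]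
  constructor
  · rintro ⟨h1, h2⟩ k
    cases k with
    | inl i => simpa using h1 i
    | inr j => simpa using h2 j
  · intro hk
    exact ⟨fun i => by simpa using hk (Sum.inl i), fun j => by simpa using hk (Sum.inr j)⟩

lemma HK.law_apply {Ω : Type*} [MeasurableSpace Ω] {P : Measure Ω} {Z : Ω → ℝ} {f : ℝ → ℝ}
    (hZ : Measurable Z) (hf0 : ∀ x, 0 ≤ f x) (hfInt : Integrable f)
    (hlaw : Measure.map Z P = volume.withDensity fun x => ENNReal.ofReal (f x))
    {B : Set ℝ} (hB : MeasurableSet B) :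
    P (Z ⁻¹' B) = ENNReal.ofReal (∫ x in B, f x) := by
  rw [← Measure.map_apply hZ hB, hlaw, withDensity_apply _ hB,
    ← ofReal_integral_eq_lintegral_ofReal hfInt.integrableOn
      (Filter.Eventually.of_forall fun x => hf0 x)]

lemma HK.prob_bound {Ω : Type*} [MeasurableSpace Ω] (P : Measure Ω) [IsProbabilityMeasure P]
    {M N : ℕ} {X : Fin M → Ω → ℝ} {Y : Fin N → Ω → ℝ} {f g : ℝ → ℝ}
    (hf0 : ∀ x, 0 ≤ f x) (hg0 : ∀ x, 0 ≤ g x)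
    (hfInt : Integrable f) (hgInt : Integrable g)
    (hfint : ∫ x, f x = 1) (hgint : ∫ x, g x = 1)
    (hXm : ∀ i, Measurable (X i)) (hYm : ∀ j, Measurable (Y j))
    (h : iIndepFun (Sum.elim X Y) P)
    (hXlaw : ∀ i, Measure.map (X i) P = volume.withDensity fun x => ENNReal.ofReal (f x))
    (hYlaw : ∀ j, Measure.map (Y j) P = volume.withDensity fun x => ENNReal.ofReal (g x))
    {J I : Set ℝ} (hJ : MeasurableSet J) (hI : MeasurableSet I) :
    (P ((⋂ i, X i ⁻¹' Jᶜ) ∩ ((⋂ j, Y j ⁻¹' Iᶜ)ᶜ))).toReal =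
      (1 - ∫ x in J, f x) ^ M * (1 - (1 - ∫ x in I, g x) ^ N) := by
  set r := ∫ x in J, f x with hr
  set q := ∫ x in I, g x with hq
  have hr1 : r ≤ 1 := by
    rw [hr, ← hfint]
    exact setIntegral_le_integral hfInt (Filter.Eventually.of_forall fun x => hf0 x)
  have hq1 : q ≤ 1 := by
    rw [hq, ← hgint]
    exact setIntegral_le_integral hgInt (Filter.Eventually.of_forall fun x => hg0 x)
  have hXc : ∀ i, P (X i ⁻¹' Jᶜ) = ENNReal.ofReal (1 - r) := by
    intro i
    rw [HK.law_apply (hXm i) hf0 hfInt (hXlaw i) hJ.compl]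
    congr 1
    have := integral_add_compl hJ hfInt
    rw [hr]; linarith [hfint]
  have hYc : ∀ j, P (Y j ⁻¹' Iᶜ) = ENNReal.ofReal (1 - q) := by
    intro j
    rw [HK.law_apply (hYm j) hg0 hgInt (hYlaw j) hI.compl]
    congr 1
    have := integral_add_compl hI hgInt
    rw [hq]; linarith [hgint]
  set A : Set Ω := ⋂ i, X i ⁻¹' Jᶜ with hA
  set D : Set Ω := ⋂ j, Y j ⁻¹' Iᶜ with hD
  have hDm : MeasurableSet D := MeasurableSet.iInter fun j => (hYm j) hI.compl
  have hPA : P A = ENNReal.ofReal ((1 - r) ^ M) := by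
    have h1 := HK.indep_prod P h hJ.compl (C := Set.univ) MeasurableSet.univ
    simp only [Set.preimage_univ, Set.iInter_univ, Set.inter_univ, measure_univ,
      Finset.prod_const_one, mul_one] at h1
    rw [hA, h1]
    simp only [hXc, Finset.prod_const, Finset.card_univ, Fintype.card_fin]
    rw [ENNReal.ofReal_pow (by linarith)]
  have hPAD : P (A ∩ D) = ENNReal.ofReal ((1 - r) ^ M) * ENNReal.ofReal ((1 - q) ^ N) := by
    have h1 := HK.indep_prod P h hJ.compl hI.compl
    rw [hA, hD, h1]
    simp only [hXc, hYc, Finset.prod_const, Finset.card_univ, Fintype.card_fin]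
    rw [ENNReal.ofReal_pow (by linarith), ENNReal.ofReal_pow (by linarith)]
  have hsub : A ∩ Dᶜ = A \ (A ∩ D) := by
    ext ω; simp only [Set.mem_inter_iff, Set.mem_diff, Set.mem_compl_iff]; tauto
  have hAm : MeasurableSet A := MeasurableSet.iInter fun i => (hXm i) hJ.compl
  have hr0 : 0 ≤ r := setIntegral_nonneg hJ fun x _ => hf0 x
  have hq0 : 0 ≤ q := setIntegral_nonneg hI fun x _ => hg0 x
  rw [hsub, measure_diff Set.inter_subset_left ((hAm.inter hDm).nullMeasurableSet)
    (measure_ne_top P _), hPA, hPAD]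
  have hle : ENNReal.ofReal ((1 - r) ^ M) * ENNReal.ofReal ((1 - q) ^ N) ≤
      ENNReal.ofReal ((1 - r) ^ M) := by
    calc ENNReal.ofReal ((1 - r) ^ M) * ENNReal.ofReal ((1 - q) ^ N)
        ≤ ENNReal.ofReal ((1 - r) ^ M) * 1 := by
          gcongr
          exact ENNReal.ofReal_le_one.mpr
            (pow_le_one₀ (by linarith) (by linarith))
      _ = ENNReal.ofReal ((1 - r) ^ M) := mul_one _
  rw [ENNReal.toReal_sub_of_le hle ENNReal.ofReal_ne_top]
  rw [ENNReal.toReal_mul, ENNReal.toReal_ofReal (pow_nonneg (by linarith) M),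
    ENNReal.toReal_ofReal (pow_nonneg (by linarith) N)]
  ring

lemma HK.rpow_neg_anti {a : ℝ} (ha : 0 ≤ a) {s t : ℝ} (hs : 0 < s) (hst : s ≤ t) :
    t ^ (-a) ≤ s ^ (-a) := by
  have ht : 0 < t := lt_of_lt_of_le hs hst
  rw [Real.rpow_neg hs.le, Real.rpow_neg ht.le]
  exact inv_anti₀ (Real.rpow_pos_of_pos hs a) (Real.rpow_le_rpow hs.le hst ha)

lemma HK.half_rpow_neg {x a : ℝ} (hx : 0 < x) : (x / 2) ^ (-a) = 2 ^ a * x ^ (-a) := by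
  rw [Real.div_rpow hx.le (by norm_num), Real.rpow_neg hx.le,
    Real.rpow_neg (by norm_num : (0:ℝ) ≤ 2)]
  field_simp

lemma HK.two_mul_rpow_neg {x a : ℝ} (hx : 0 ≤ x) : (2 * x) ^ (-a) = 2 ^ (-a) * x ^ (-a) :=
  Real.mul_rpow (by norm_num) hx

lemma HK.tail_bounds {f : ℝ → ℝ} {A a : ℝ} (hA : 0 < A)
    (h : Tendsto (fun x => f x / (A * x ^ (-a))) atTop (nhds 1)) :
    ∃ T : ℝ, 1 ≤ T ∧ ∀ x ≥ T, A / 2 * x ^ (-a) ≤ f x ∧ f x ≤ 2 * A * x ^ (-a) := by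
  have h2 : ∀ᶠ x in atTop, f x / (A * x ^ (-a)) ∈ Set.Ioo (1/2 : ℝ) 2 :=
    h.eventually (Ioo_mem_nhds (by norm_num) (by norm_num))
  rw [eventually_atTop] at h2
  obtain ⟨T₀, hT₀⟩ := h2
  refine ⟨max T₀ 1, le_max_right _ _, fun x hx => ?_⟩
  have hx1 : (1:ℝ) ≤ x := le_trans (le_max_right _ _) hx
  have hx0 : (0:ℝ) < x := by linarith
  have hd : 0 < A * x ^ (-a) := by positivity
  obtain ⟨hl, hr⟩ := hT₀ x (le_trans (le_max_left _ _) hx)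
  have hl' : 1/2 * (A * x ^ (-a)) < f x := (lt_div_iff₀ hd).mp hl
  have hr' : f x < 2 * (A * x ^ (-a)) := (div_lt_iff₀ hd).mp hr
  constructor <;> nlinarith

lemma HK.integral_Icc_le {f : ℝ → ℝ} (hfInt : Integrable f) {a b c : ℝ} (hab : a ≤ b)
    (hc : ∀ t ∈ Set.Icc a b, f t ≤ c) : ∫ t in Set.Icc a b, f t ≤ c * (b - a) := by
  have h1 : ∫ t in Set.Icc a b, f t ≤ ∫ _ in Set.Icc a b, c :=
    setIntegral_mono_on hfInt.integrableOn
      (integrableOn_const (by rw [Real.volume_Icc]; exact ENNReal.ofReal_ne_top))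
      measurableSet_Icc hc
  rw [setIntegral_const, Real.volume_real_Icc_of_le hab, smul_eq_mul,
    mul_comm] at h1
  exact h1

lemma HK.integral_Icc_ge {f : ℝ → ℝ} (hfInt : Integrable f) {a b c : ℝ} (hab : a ≤ b)
    (hc : ∀ t ∈ Set.Icc a b, c ≤ f t) : c * (b - a) ≤ ∫ t in Set.Icc a b, f t := by
  have h1 : ∫ _ in Set.Icc a b, c ≤ ∫ t in Set.Icc a b, f t :=
    setIntegral_mono_on
      (integrableOn_const (by rw [Real.volume_Icc]; exact ENNReal.ofReal_ne_top))
      hfInt.integrableOn measurableSet_Icc hc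
  rw [setIntegral_const, Real.volume_real_Icc_of_le hab, smul_eq_mul,
    mul_comm] at h1
  exact h1

set_option maxHeartbeats 2000000 in
/-- **Theorem 3.2 (Hall–Kang).**  If (3.1), (3.2) and the Pareto-type tail condition (3.9)
hold, then for all sufficiently large `x₀`,
`n h ∫_{x₀}^∞ P(x is classified by 𝒜₂ as coming from g) f(x) dx → ∞` as `n → ∞`. -/
theorem stmt9 {Ω : Type*} [MeasurableSpace Ω] (P : Measure Ω) [IsProbabilityMeasure P]
    (f g K : ℝ → ℝ) (p ρ : ℝ) (hp0 : 0 < p) (hp1 : p < 1) (hρ0 : 0 < ρ) (hρ1 : ρ < 1)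
    -- f and g are probability densities
    (hf0 : ∀ x, 0 ≤ f x) (hg0 : ∀ x, 0 ≤ g x)
    (hfInt : Integrable f) (hgInt : Integrable g)
    (hfint : ∫ x, f x = 1) (hgint : ∫ x, g x = 1)
    -- training samples
    (m : ℕ → ℕ) (X Y : ℕ → ℕ → Ω → ℝ)
    (hXmeas : ∀ n i, Measurable (X n i)) (hYmeas : ∀ n i, Measurable (Y n i))
    (hXlaw : ∀ n, ∀ i < m n,
      Measure.map (X n i) P = volume.withDensity fun x => ENNReal.ofReal (f x))
    (hYlaw : ∀ n, ∀ i < n,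
      Measure.map (Y n i) P = volume.withDensity fun x => ENNReal.ofReal (g x))
    (hindep : ∀ n, iIndepFun
      (Sum.elim (fun i : Fin (m n) => X n (i : ℕ)) (fun j : Fin n => Y n (j : ℕ))) P)
    -- m/n bounded away from 0 and ∞
    (c₁ c₂ : ℝ) (hc₁ : 0 < c₁)
    (hratio : ∀ᶠ n : ℕ in atTop, c₁ ≤ (m n : ℝ) / n ∧ (m n : ℝ) / n ≤ c₂)
    -- (3.1)
    (hKmeas : Measurable K) (hK0 : ∀ u, 0 ≤ K u) (hKbdd : ∃ C, ∀ u, K u ≤ C)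
    (hKsymm : ∀ u, K (-u) = K u) (hKsupp : HasCompactSupport K) (hKint : ∫ u, K u = 1)
    (hKhold : ∃ (C θ : NNReal), 0 < θ ∧ HolderWith C θ K)
    -- (3.2)
    (h1 h2 : ℕ → ℝ) (h1pos : ∀ n, 0 < h1 n) (h2pos : ∀ n, 0 < h2 n)
    (d₁ d₂ : ℝ) (hd₁ : 0 < d₁)
    (hh1 : ∀ᶠ n : ℕ in atTop,
      d₁ * (n : ℝ) ^ (-ρ) ≤ h1 n ∧ h1 n ≤ d₂ * (n : ℝ) ^ (-ρ))
    (hh2 : ∀ᶠ n : ℕ in atTop,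
      d₁ * (n : ℝ) ^ (-ρ) ≤ h2 n ∧ h2 n ≤ d₂ * (n : ℝ) ^ (-ρ))
    -- (3.9): Pareto-type tails, f(x) ~ a x^{-α}, g(x) ~ b x^{-β}, 1 < α < β < α + 1
    (A B α β : ℝ) (hA : 0 < A) (hB : 0 < B)
    (hα : 1 < α) (hαβ : α < β) (hβ : β < α + 1)
    (hftail : Tendsto (fun x : ℝ => f x / (A * x ^ (-α))) atTop (nhds 1))
    (hgtail : Tendsto (fun x : ℝ => g x / (B * x ^ (-β))) atTop (nhds 1)) :
    ∃ x₁ : ℝ, ∀ x₀ ≥ x₁,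
      Tendsto (fun n : ℕ => (n : ℝ) * (n : ℝ) ^ (-ρ) *
          ∫ x in Set.Ioi x₀,
            (P {ω | A2ClassG p (fun z => kde K (m n) (h1 n) (X n) z ω)
                (fun z => kde K n (h2 n) (Y n) z ω) x}).toReal * f x)
        atTop atTop := by
  classical
  obtain ⟨CH, θ, hθ, hHol⟩ := hKhold
  have hKcont : Continuous K := hHol.continuous hθ
  obtain ⟨R, hR⟩ := (Metric.isBounded_iff_subset_closedBall 0).mp hKsupp.isBounded
  set S := max R 1 with hSdef
  have hS1 : (1:ℝ) ≤ S := le_max_right _ _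
  have hSpos : (0:ℝ) < S := by linarith
  have hsupp_sub : ∀ u : ℝ, K u ≠ 0 → |u| ≤ S := by
    intro u hu
    have h1 : u ∈ tsupport K := subset_tsupport K hu
    have h2 := hR h1
    rw [Metric.mem_closedBall, Real.dist_eq, sub_zero] at h2
    exact le_trans h2 (le_max_left _ _)
  have hSsupp : ∀ u : ℝ, S < |u| → K u = 0 := fun u hu => by
    by_contra h; exact absurd (hsupp_sub u h) (not_le.mpr hu)
  obtain ⟨u₀, hu₀⟩ : ∃ u₀, 0 < K u₀ := by
    by_contra h
    push_neg at h
    have hz : K = fun _ => (0:ℝ) := funext fun u => le_antisymm (h u) (hK0 u)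
    rw [hz] at hKint
    simp at hKint
  set κ := K u₀ / 2 with hκdef
  have hκ : 0 < κ := by positivity
  obtain ⟨ε, hε, hball⟩ : ∃ ε > 0, ∀ u, dist u u₀ < ε → κ < K u := by
    have h1 : ∀ᶠ u in nhds u₀, κ < K u :=
      (hKcont.tendsto u₀).eventually (eventually_gt_nhds (by
        rw [hκdef]; linarith))
    exact Metric.eventually_nhds_iff.mp h1
  set δ := min (ε/2) 1 with hδdef
  have hδ0 : 0 < δ := lt_min (by linarith) one_pos
  have hδ1 : δ ≤ 1 := min_le_right _ _
  have hKδ : ∀ u, |u - u₀| ≤ δ → κ ≤ K u := by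
    intro u hu
    refine (hball u ?_).le
    rw [Real.dist_eq]
    have h1 : δ ≤ ε/2 := min_le_left _ _
    linarith [hu]
  have hu₀S : |u₀| ≤ S := hsupp_sub u₀ (ne_of_gt hu₀)
  obtain ⟨Tf, hTf1, hTf⟩ := HK.tail_bounds hA hftail
  obtain ⟨Tg, hTg1, hTg⟩ := HK.tail_bounds hB hgtail
  set T := max Tf Tg with hTdef
  have hT1 : (1:ℝ) ≤ T := le_trans hTf1 (le_max_left _ _)
  have hTfT : Tf ≤ T := le_max_left _ _
  have hTgT : Tg ≤ T := le_max_right _ _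
  -- positivity of c₂ and d₂
  obtain ⟨n₂, hn₂⟩ := ((hratio.and hh1).and (eventually_ge_atTop 1)).exists
  have hc₂ : 0 < c₂ := lt_of_lt_of_le hc₁ (le_trans hn₂.1.1.1 hn₂.1.1.2)
  have hd₂pos : 0 < d₂ := by
    have h1 : 0 < h1 n₂ := h1pos n₂
    have h2 := le_trans h1.le hn₂.1.2.2
    have h3 : (0:ℝ) < ((n₂:ℕ):ℝ) ^ (-ρ) := Real.rpow_pos_of_pos (by exact_mod_cast hn₂.2) _
    nlinarith
  have hd₁₂ : d₁ ≤ d₂ := by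
    have h1 := hn₂.1.2.1
    have h2 := hn₂.1.2.2
    have h3 : (0:ℝ) < ((n₂:ℕ):ℝ) ^ (-ρ) := Real.rpow_pos_of_pos (by exact_mod_cast hn₂.2) _
    nlinarith
  -- constants
  have h2α : (0:ℝ) < (2:ℝ) ^ α := Real.rpow_pos_of_pos (by norm_num) _
  have h2β : (0:ℝ) < (2:ℝ) ^ β := Real.rpow_pos_of_pos (by norm_num) _
  have h2negβ : (0:ℝ) < (2:ℝ) ^ (-β) := Real.rpow_pos_of_pos (by norm_num) _
  set Cr := 4 * S * A * (2:ℝ) ^ α with hCrdef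
  have hCrpos : 0 < Cr := by positivity
  set Cq := 4 * δ * B * (2:ℝ) ^ β with hCqdef
  have hCqpos : 0 < Cq := by positivity
  set cq := B * δ * (2:ℝ) ^ (-β) with hcqdef
  have hcqpos : 0 < cq := by positivity
  set c0 := A * cq * d₁ / 8 with hc0def
  have hc0pos : 0 < c0 := by positivity
  set D := 2 * Cr * c₂ * d₂ + Cq * d₂ + 1 with hDdef
  have hD1 : (1:ℝ) ≤ D := by
    have ha1 : 0 ≤ 2 * Cr * c₂ * d₂ := by positivity
    have ha2 : 0 ≤ Cq * d₂ := by positivity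
    rw [hDdef]; linarith
  have hDpos : (0:ℝ) < D := by linarith
  have hαpos : (0:ℝ) < α := by linarith
  have hβpos : (0:ℝ) < β := by linarith
  have hαβ1 : (1:ℝ) < α + β := by linarith
  refine ⟨2 * T + 2, fun x₀ hx₀ => ?_⟩
  have hx₀pos : 0 < x₀ := by linarith
  -- abbreviations
  set a := α + β - 1 with hadef
  have hapos : 0 < a := by rw [hadef]; linarith
  set τ := (1 - ρ) * α⁻¹ with hτdef
  have hτpos : 0 < τ := by
    apply mul_pos (by linarith)
    exact inv_pos.mpr hαpos
  set C6 := x₀ + D ^ α⁻¹ with hC6def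
  have hC6pos : 0 < C6 := by
    have : (0:ℝ) < D ^ α⁻¹ := Real.rpow_pos_of_pos hDpos _
    rw [hC6def]; linarith
  set e := 2 * (1 - ρ) + τ * (1 - (α + β)) with hedef
  have hepos : 0 < e := by
    have he2 : e = (1 - ρ) * ((α + 1 - β) / α) := by
      rw [hedef, hτdef]
      field_simp
      ring
    rw [he2]
    exact mul_pos (by linarith) (div_pos (by linarith) hαpos)
  set C7 := c0 / a * C6 ^ (1 - (α + β)) with hC7def
  have hC7pos : 0 < C7 := by
    have h1 : (0:ℝ) < C6 ^ (1 - (α + β)) := Real.rpow_pos_of_pos hC6pos _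
    have h2 : 0 < c0 / a := div_pos hc0pos hapos
    rw [hC7def]; positivity
  have main : ∀ᶠ n : ℕ in atTop,
      c0 / a * ((n:ℝ) ^ (1 - ρ)) * ((n:ℝ) ^ (1 - ρ)) *
        ((x₀ + (D * (n:ℝ) ^ (1 - ρ)) ^ α⁻¹) ^ (1 - (α + β))) ≤
      (n : ℝ) * (n : ℝ) ^ (-ρ) *
          ∫ x in Set.Ioi x₀,
            (P {ω | A2ClassG p (fun z => kde K (m n) (h1 n) (X n) z ω)
                (fun z => kde K n (h2 n) (Y n) z ω) x}).toReal * f x := by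
    have hcond : ∀ᶠ n : ℕ in atTop, (S + 1) * (d₂ * (n:ℝ) ^ (-ρ)) ≤ 1 := by
      have h0 : Tendsto (fun n : ℕ => (S + 1) * (d₂ * (n:ℝ) ^ (-ρ))) atTop (nhds 0) := by
        have h1 : Tendsto (fun n : ℕ => ((n:ℝ)) ^ (-ρ)) atTop (nhds 0) :=
          (tendsto_rpow_neg_atTop hρ0).comp tendsto_natCast_atTop_atTop
        have h2 := (h1.const_mul d₂).const_mul (S + 1)
        simpa using h2
      have := h0.eventually_lt_const (show (0:ℝ) < 1 by norm_num)
      filter_upwards [this] with n hn using hn.le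
    filter_upwards [hratio, hh1, hh2, eventually_ge_atTop 1, hcond] with n hrat hh1n hh2n hn hc5
    have hn1 : (1:ℝ) ≤ (n:ℝ) := by exact_mod_cast hn
    have hnpos : (0:ℝ) < (n:ℝ) := by linarith
    have hnρ : (0:ℝ) < (n:ℝ) ^ (-ρ) := Real.rpow_pos_of_pos hnpos _
    set N := (n:ℝ) ^ (1 - ρ) with hNdef
    have hNpos : 0 < N := Real.rpow_pos_of_pos hnpos _
    have hN1 : 1 ≤ N := Real.one_le_rpow hn1 (by linarith)
    have hNn : (n:ℝ) * (n:ℝ) ^ (-ρ) = N := by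
      rw [hNdef, show (1:ℝ) - ρ = 1 + (-ρ) by ring, Real.rpow_add hnpos, Real.rpow_one]
    have hmlen : (m n : ℝ) ≤ c₂ * n := by
      have h1 := hrat.2
      rw [div_le_iff₀ hnpos] at h1
      linarith
    have hh1le : h1 n ≤ d₂ * (n:ℝ) ^ (-ρ) := hh1n.2
    have hh2le : h2 n ≤ d₂ * (n:ℝ) ^ (-ρ) := hh2n.2
    have hh2ge : d₁ * (n:ℝ) ^ (-ρ) ≤ h2 n := hh2n.1
    have hSh1 : S * h1 n ≤ 1 := by
      have h1 : S * h1 n ≤ S * (d₂ * (n:ℝ) ^ (-ρ)) := mul_le_mul_of_nonneg_left hh1le hSpos.le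
      have h2 : S * (d₂ * (n:ℝ) ^ (-ρ)) ≤ (S + 1) * (d₂ * (n:ℝ) ^ (-ρ)) :=
        mul_le_mul_of_nonneg_right (by linarith) (by positivity)
      linarith
    have hS1h2 : (S + 1) * h2 n ≤ 1 := by
      have h1 : (S + 1) * h2 n ≤ (S + 1) * (d₂ * (n:ℝ) ^ (-ρ)) :=
        mul_le_mul_of_nonneg_left hh2le (by linarith)
      linarith
    set w := (D * N) ^ α⁻¹ with hwdef
    have hwpos : 0 < w := Real.rpow_pos_of_pos (by positivity) _
    set y := x₀ + w with hydef
    have hyx₀ : x₀ ≤ y := by rw [hydef]; linarith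
    have hypos : 0 < y := by linarith
    -- the pointwise lower bound
    have hpt : ∀ x : ℝ, y ≤ x →
        c0 * N * x ^ (-(α + β)) ≤
          (P {ω | A2ClassG p (fun z => kde K (m n) (h1 n) (X n) z ω)
              (fun z => kde K n (h2 n) (Y n) z ω) x}).toReal * f x := by
      intro x hx
      have hxw : w ≤ x := by rw [hydef] at hx; linarith
      have hx2T : 2 * T + 2 ≤ x := by linarith
      have hx1 : (1:ℝ) ≤ x := by linarith
      have hx2 : (2:ℝ) ≤ x := by linarith
      have hxpos : (0:ℝ) < x := by linarith
      have hxhalf : (0:ℝ) < x / 2 := by linarith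
      have hxT1 : T ≤ x - 1 := by linarith
      have hxα : D * N ≤ x ^ α := by
        have h1 : w ^ α = D * N := by
          rw [hwdef, ← Real.rpow_mul (by positivity), inv_mul_cancel₀ (ne_of_gt hαpos),
            Real.rpow_one]
        calc D * N = w ^ α := h1.symm
          _ ≤ x ^ α := Real.rpow_le_rpow hwpos.le hxw hαpos.le
      have hxnegα : x ^ (-α) ≤ (D * N)⁻¹ := by
        rw [Real.rpow_neg hxpos.le]
        exact inv_anti₀ (by positivity) hxα
      have hxnegβα : x ^ (-β) ≤ x ^ (-α) :=
        Real.rpow_le_rpow_of_exponent_le hx1 (by linarith)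
      set J := Set.Icc (x - S * h1 n) (x + S * h1 n) with hJdef
      set I := Set.Icc (x - (u₀ + δ) * h2 n) (x - (u₀ - δ) * h2 n) with hIdef
      have hJord : x - S * h1 n ≤ x + S * h1 n := by
        have := mul_pos hSpos (h1pos n); linarith
      have hIord : x - (u₀ + δ) * h2 n ≤ x - (u₀ - δ) * h2 n := by
        have h1 : (u₀ - δ) * h2 n ≤ (u₀ + δ) * h2 n :=
          mul_le_mul_of_nonneg_right (by linarith) (h2pos n).le
        linarith
      have hu1 : u₀ + δ ≤ S + 1 := by
        have := (abs_le.mp hu₀S).2; linarith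
      have hu2 : -(S + 1) ≤ u₀ - δ := by
        have := (abs_le.mp hu₀S).1; linarith
      set r := ∫ t in J, f t with hrdef
      set q := ∫ t in I, g t with hqdef
      -- bounds on r
      have hfJ : ∀ t ∈ J, f t ≤ 2 * A * ((2:ℝ) ^ α * x ^ (-α)) := by
        intro t ht
        obtain ⟨ht1, ht2⟩ := ht
        have ht3 : x - 1 ≤ t := by linarith [hSh1]
        have ht4 : Tf ≤ t := by linarith
        have h5 := (hTf t ht4).2
        have h6 : t ^ (-α) ≤ (x / 2) ^ (-α) := HK.rpow_neg_anti hαpos.le hxhalf (by linarith)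
        rw [HK.half_rpow_neg hxpos] at h6
        have h7 : 2 * A * t ^ (-α) ≤ 2 * A * ((2:ℝ) ^ α * x ^ (-α)) :=
          mul_le_mul_of_nonneg_left h6 (by positivity)
        linarith
      have hrle : r ≤ Cr * (h1 n * x ^ (-α)) := by
        have hcalc := HK.integral_Icc_le hfInt hJord hfJ
        have h2 : x + S * h1 n - (x - S * h1 n) = 2 * (S * h1 n) := by ring
        rw [h2] at hcalc
        calc r ≤ 2 * A * ((2:ℝ) ^ α * x ^ (-α)) * (2 * (S * h1 n)) := hcalc
          _ = Cr * (h1 n * x ^ (-α)) := by rw [hCrdef]; ring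
      have hr0 : 0 ≤ r := setIntegral_nonneg measurableSet_Icc fun t _ => hf0 t
      have hr1 : r ≤ 1 := by
        rw [hrdef, ← hfint]
        exact setIntegral_le_integral hfInt (Filter.Eventually.of_forall hf0)
      have hMr : (m n : ℝ) * r ≤ 1 / 2 := by
        have hcalc : (m n : ℝ) * r ≤ (c₂ * n) * (Cr * (h1 n * x ^ (-α))) :=
          mul_le_mul hmlen hrle hr0 (by positivity)
        have h3 : (c₂ * n) * (Cr * (h1 n * x ^ (-α))) ≤
            (c₂ * n) * (Cr * ((d₂ * (n:ℝ) ^ (-ρ)) * x ^ (-α))) := by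
          apply mul_le_mul_of_nonneg_left _ (by positivity)
          apply mul_le_mul_of_nonneg_left _ hCrpos.le
          exact mul_le_mul_of_nonneg_right hh1le (by positivity)
        have h4 : (c₂ * n) * (Cr * ((d₂ * (n:ℝ) ^ (-ρ)) * x ^ (-α))) =
            Cr * c₂ * d₂ * (N * x ^ (-α)) := by
          rw [← hNn]; ring
        have h5 : N * x ^ (-α) ≤ N * (D * N)⁻¹ := mul_le_mul_of_nonneg_left hxnegα hNpos.le
        have h6 : N * (D * N)⁻¹ = D⁻¹ := by
          rw [mul_inv, mul_comm D⁻¹, ← mul_assoc, mul_inv_cancel₀ (ne_of_gt hNpos), one_mul]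
        have h7 : Cr * c₂ * d₂ * D⁻¹ ≤ 1 / 2 := by
          have h8 : 2 * (Cr * c₂ * d₂) ≤ D := by
            have h9 : 0 ≤ Cq * d₂ := by positivity
            rw [hDdef]; linarith
          rw [mul_inv_le_iff₀ hDpos]
          linarith
        have h10 : Cr * c₂ * d₂ * (N * x ^ (-α)) ≤ Cr * c₂ * d₂ * D⁻¹ := by
          rw [← h6]
          exact mul_le_mul_of_nonneg_left h5 (by positivity)
        linarith
      -- bounds on q
      have hgIlow : ∀ t ∈ I, B / 2 * ((2:ℝ) ^ (-β) * x ^ (-β)) ≤ g t := by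
        intro t ht
        obtain ⟨ht1, ht2⟩ := ht
        have hb1 : (u₀ + δ) * h2 n ≤ (S + 1) * h2 n :=
          mul_le_mul_of_nonneg_right hu1 (h2pos n).le
        have hb2 : -((S + 1) * h2 n) ≤ (u₀ - δ) * h2 n := by
          have := mul_le_mul_of_nonneg_right hu2 (h2pos n).le
          linarith [this]
        have ht3 : x - 1 ≤ t := by linarith
        have ht4 : t ≤ x + 1 := by linarith
        have ht5 : Tg ≤ t := by linarith
        have ht0 : (0:ℝ) < t := by linarith
        have h5 := (hTg t ht5).1
        have h6 : (2 * x) ^ (-β) ≤ t ^ (-β) := HK.rpow_neg_anti hβpos.le ht0 (by linarith)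
        rw [HK.two_mul_rpow_neg hxpos.le] at h6
        have h7 : B / 2 * ((2:ℝ) ^ (-β) * x ^ (-β)) ≤ B / 2 * t ^ (-β) :=
          mul_le_mul_of_nonneg_left h6 (by positivity)
        linarith
      have hgIup : ∀ t ∈ I, g t ≤ 2 * B * ((2:ℝ) ^ β * x ^ (-β)) := by
        intro t ht
        obtain ⟨ht1, ht2⟩ := ht
        have hb1 : (u₀ + δ) * h2 n ≤ (S + 1) * h2 n :=
          mul_le_mul_of_nonneg_right hu1 (h2pos n).le
        have ht3 : x - 1 ≤ t := by linarith
        have ht5 : Tg ≤ t := by linarith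
        have h5 := (hTg t ht5).2
        have h6 : t ^ (-β) ≤ (x / 2) ^ (-β) := HK.rpow_neg_anti hβpos.le hxhalf (by linarith)
        rw [HK.half_rpow_neg hxpos] at h6
        have h7 : 2 * B * t ^ (-β) ≤ 2 * B * ((2:ℝ) ^ β * x ^ (-β)) :=
          mul_le_mul_of_nonneg_left h6 (by positivity)
        linarith
      have hIlen : x - (u₀ - δ) * h2 n - (x - (u₀ + δ) * h2 n) = 2 * δ * h2 n := by ring
      have hqge : cq * (h2 n * x ^ (-β)) ≤ q := by
        have hcalc := HK.integral_Icc_ge hgInt hIord hgIlow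
        rw [hIlen] at hcalc
        calc cq * (h2 n * x ^ (-β))
            = B / 2 * ((2:ℝ) ^ (-β) * x ^ (-β)) * (2 * δ * h2 n) := by rw [hcqdef]; ring
          _ ≤ q := hcalc
      have hqle : q ≤ Cq * (h2 n * x ^ (-β)) := by
        have hcalc := HK.integral_Icc_le hgInt hIord hgIup
        rw [hIlen] at hcalc
        calc q ≤ 2 * B * ((2:ℝ) ^ β * x ^ (-β)) * (2 * δ * h2 n) := hcalc
          _ = Cq * (h2 n * x ^ (-β)) := by rw [hCqdef]; ring
      have hq0 : 0 ≤ q := setIntegral_nonneg measurableSet_Icc fun t _ => hg0 t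
      have hq1 : q ≤ 1 := by
        rw [hqdef, ← hgint]
        exact setIntegral_le_integral hgInt (Filter.Eventually.of_forall hg0)
      have hnq : (n:ℝ) * q ≤ 1 := by
        have hcalc : (n:ℝ) * q ≤ (n:ℝ) * (Cq * ((d₂ * (n:ℝ) ^ (-ρ)) * x ^ (-β))) := by
          apply mul_le_mul_of_nonneg_left _ hnpos.le
          calc q ≤ Cq * (h2 n * x ^ (-β)) := hqle
            _ ≤ Cq * ((d₂ * (n:ℝ) ^ (-ρ)) * x ^ (-β)) := by
                apply mul_le_mul_of_nonneg_left _ hCqpos.le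
                exact mul_le_mul_of_nonneg_right hh2le (by positivity)
        have h4 : (n:ℝ) * (Cq * ((d₂ * (n:ℝ) ^ (-ρ)) * x ^ (-β))) =
            Cq * d₂ * (N * x ^ (-β)) := by
          rw [← hNn]; ring
        have h5 : N * x ^ (-β) ≤ N * (D * N)⁻¹ := by
          apply mul_le_mul_of_nonneg_left _ hNpos.le
          exact le_trans hxnegβα hxnegα
        have h6 : N * (D * N)⁻¹ = D⁻¹ := by
          rw [mul_inv, mul_comm D⁻¹, ← mul_assoc, mul_inv_cancel₀ (ne_of_gt hNpos), one_mul]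
        have h7 : Cq * d₂ * D⁻¹ ≤ 1 := by
          have h8 : Cq * d₂ ≤ D := by
            have h9 : 0 ≤ 2 * Cr * c₂ * d₂ := by positivity
            rw [hDdef]; linarith
          rw [mul_inv_le_iff₀ hDpos]
          linarith
        have h10 : Cq * d₂ * (N * x ^ (-β)) ≤ Cq * d₂ * D⁻¹ := by
          rw [← h6]
          exact mul_le_mul_of_nonneg_left h5 (by positivity)
        linarith
      -- the good event and its probability
      have hPE := HK.prob_bound P (X := fun i : Fin (m n) => X n (i : ℕ))
        (Y := fun j : Fin n => Y n (j : ℕ)) hf0 hg0 hfInt hgInt hfint hgint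
        (fun i => hXmeas n i) (fun j => hYmeas n j) (hindep n)
        (fun i => hXlaw n i i.isLt) (fun j => hYlaw n j j.isLt)
        (measurableSet_Icc (a := x - S * h1 n) (b := x + S * h1 n))
        (measurableSet_Icc (a := x - (u₀ + δ) * h2 n) (b := x - (u₀ - δ) * h2 n))
      have hEvsub : ((⋂ i : Fin (m n), (fun ω => X n (i : ℕ) ω) ⁻¹' Jᶜ) ∩
          ((⋂ j : Fin n, (fun ω => Y n (j : ℕ) ω) ⁻¹' Iᶜ)ᶜ)) ⊆
          {ω | A2ClassG p (fun z => kde K (m n) (h1 n) (X n) z ω)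
            (fun z => kde K n (h2 n) (Y n) z ω) x} := by
        rintro ω ⟨hω1, hω2⟩
        have hF0 : kde K (m n) (h1 n) (X n) x ω = 0 := by
          apply HK.kde_zero hSsupp (h1pos n)
          intro i hi
          have hXi : X n i ω ∉ J := by
            have hmem := Set.mem_iInter.mp hω1 ⟨i, hi⟩
            simpa using hmem
          rw [hJdef, Set.mem_Icc, not_and_or] at hXi
          rcases hXi with hc | hc
          · push_neg at hc
            have hlt : S * h1 n < x - X n i ω := by linarith
            exact lt_of_lt_of_le hlt (le_abs_self _)
          · push_neg at hc
            have hlt : S * h1 n < X n i ω - x := by linarith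
            have hlt2 : X n i ω - x ≤ |x - X n i ω| := by
              rw [abs_sub_comm]; exact le_abs_self _
            linarith
        obtain ⟨j, hj⟩ : ∃ j : Fin n, Y n (j : ℕ) ω ∈ I := by
          by_contra hcon
          push_neg at hcon
          exact hω2 (Set.mem_iInter.mpr fun j => hcon j)
        have hG0 : 0 < kde K n (h2 n) (Y n) x ω := by
          refine HK.kde_pos hK0 (by exact_mod_cast hn) (h2pos n) j.isLt hκ ?_
          apply hKδ
          rw [hIdef, Set.mem_Icc] at hj
          rw [abs_le]
          constructor
          · have hd : u₀ - δ ≤ (x - Y n (j : ℕ) ω) / h2 n :=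
              (le_div_iff₀ (h2pos n)).mpr (by linarith [hj.2])
            linarith
          · have hd : (x - Y n (j : ℕ) ω) / h2 n ≤ u₀ + δ :=
              (div_le_iff₀ (h2pos n)).mpr (by linarith [hj.1])
            linarith
        refine Or.inl ⟨?_, ?_⟩
        · intro hcon; exact absurd hcon.2 hG0.ne'
        · show p * kde K (m n) (h1 n) (X n) x ω - (1 - p) * kde K n (h2 n) (Y n) x ω < 0
          rw [hF0]
          have hm1 := mul_pos (show (0:ℝ) < 1 - p by linarith) hG0
          linarith
      have hprob : cq * d₁ / 4 * (N * x ^ (-β)) ≤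
          (P {ω | A2ClassG p (fun z => kde K (m n) (h1 n) (X n) z ω)
            (fun z => kde K n (h2 n) (Y n) z ω) x}).toReal := by
        have hmono := measure_mono (μ := P) hEvsub
        have h2' := ENNReal.toReal_mono (measure_ne_top P _) hmono
        rw [hPE] at h2'
        have hb1 : (1:ℝ) / 2 ≤ (1 - r) ^ (m n) := by
          have := HK.bern_up (m n) hr1
          linarith
        have hb2 : (n:ℝ) * q / 2 ≤ 1 - (1 - q) ^ n := HK.bern_low n hq0 hq1 hnq
        have hb2' : 0 ≤ (n:ℝ) * q / 2 := by positivity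
        have hb3 : (n:ℝ) * q / 4 ≤ (1 - r) ^ (m n) * (1 - (1 - q) ^ n) := by
          have := mul_le_mul hb1 hb2 hb2' (by positivity)
          calc (n:ℝ) * q / 4 = 1 / 2 * ((n:ℝ) * q / 2) := by ring
            _ ≤ (1 - r) ^ (m n) * (1 - (1 - q) ^ n) := this
        have hb4 : cq * d₁ / 4 * (N * x ^ (-β)) ≤ (n:ℝ) * q / 4 := by
          have hc1 : d₁ * (n:ℝ) ^ (-ρ) * (cq * x ^ (-β)) ≤ h2 n * (cq * x ^ (-β)) := by
            apply mul_le_mul_of_nonneg_right hh2ge (by positivity)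
          have hc2 : (n:ℝ) * (cq * (h2 n * x ^ (-β))) ≤ (n:ℝ) * q :=
            mul_le_mul_of_nonneg_left hqge hnpos.le
          have hc3 : cq * d₁ * (N * x ^ (-β)) ≤ (n:ℝ) * (cq * (h2 n * x ^ (-β))) := by
            rw [← hNn]
            have hc3' := mul_le_mul_of_nonneg_left hc1 hnpos.le
            calc cq * d₁ * (((n:ℝ) * (n:ℝ) ^ (-ρ)) * x ^ (-β))
                = (n:ℝ) * (d₁ * (n:ℝ) ^ (-ρ) * (cq * x ^ (-β))) := by ring
              _ ≤ (n:ℝ) * (h2 n * (cq * x ^ (-β))) := hc3'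
              _ = (n:ℝ) * (cq * (h2 n * x ^ (-β))) := by ring
          linarith [hc2, hc3]
        linarith
      have hflow : A / 2 * x ^ (-α) ≤ f x := (hTf x (by linarith)).1
      have hsplit : x ^ (-(α + β)) = x ^ (-β) * x ^ (-α) := by
        rw [← Real.rpow_add hxpos]
        congr 1
        ring
      calc c0 * N * x ^ (-(α + β))
          = (cq * d₁ / 4 * (N * x ^ (-β))) * (A / 2 * x ^ (-α)) := by
            rw [hsplit, hc0def]; ring
        _ ≤ (P {ω | A2ClassG p (fun z => kde K (m n) (h1 n) (X n) z ω)
              (fun z => kde K n (h2 n) (Y n) z ω) x}).toReal * f x := by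
            apply mul_le_mul hprob hflow (by positivity) ENNReal.toReal_nonneg
    -- measurability of the integrand
    have hFj : Measurable fun s : ℝ × Ω => kde K (m n) (h1 n) (X n) s.1 s.2 :=
      HK.kde_jmeas hKmeas _ _ (fun i => hXmeas n i)
    have hGj : Measurable fun s : ℝ × Ω => kde K n (h2 n) (Y n) s.1 s.2 :=
      HK.kde_jmeas hKmeas _ _ (fun i => hYmeas n i)
    have hs' : MeasurableSet {s : ℝ × Ω |
        ¬(kde K (m n) (h1 n) (X n) s.1 s.2 = 0 ∧ kde K n (h2 n) (Y n) s.1 s.2 = 0) ∧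
        p * kde K (m n) (h1 n) (X n) s.1 s.2 - (1 - p) * kde K n (h2 n) (Y n) s.1 s.2 < 0} := by
      apply MeasurableSet.inter
      · exact ((hFj (measurableSet_singleton 0)).inter (hGj (measurableSet_singleton 0))).compl
      · exact measurableSet_lt
          ((measurable_const.mul hFj).sub (measurable_const.mul hGj)) measurable_const
    have hsec : ∀ x : ℝ, x₀ < x →
        {ω | A2ClassG p (fun z => kde K (m n) (h1 n) (X n) z ω)
          (fun z => kde K n (h2 n) (Y n) z ω) x} =
        Prod.mk x ⁻¹' {s : ℝ × Ω |
          ¬(kde K (m n) (h1 n) (X n) s.1 s.2 = 0 ∧ kde K n (h2 n) (Y n) s.1 s.2 = 0) ∧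
          p * kde K (m n) (h1 n) (X n) s.1 s.2 -
            (1 - p) * kde K n (h2 n) (Y n) s.1 s.2 < 0} := by
      intro x hx
      ext ω
      simp only [Set.mem_setOf_eq, Set.mem_preimage]
      exact HK.A2_iff (HK.kde_cont hKcont n (h2 n) (Y n) ω) (lt_trans hx₀pos hx)
    have hmeasP : Measurable fun x : ℝ => (P (Prod.mk x ⁻¹' {s : ℝ × Ω |
        ¬(kde K (m n) (h1 n) (X n) s.1 s.2 = 0 ∧ kde K n (h2 n) (Y n) s.1 s.2 = 0) ∧
        p * kde K (m n) (h1 n) (X n) s.1 s.2 -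
          (1 - p) * kde K n (h2 n) (Y n) s.1 s.2 < 0})).toReal :=
      (measurable_measure_prodMk_left hs').ennreal_toReal
    have hφae : AEStronglyMeasurable (fun x : ℝ =>
        (P {ω | A2ClassG p (fun z => kde K (m n) (h1 n) (X n) z ω)
          (fun z => kde K n (h2 n) (Y n) z ω) x}).toReal * f x)
        (volume.restrict (Set.Ioi x₀)) := by
      refine AEStronglyMeasurable.congr
        ((hmeasP.aestronglyMeasurable.restrict).mul hfInt.1.restrict) ?_
      filter_upwards [ae_restrict_mem measurableSet_Ioi] with x hx
      simp only [Pi.mul_apply]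
      rw [hsec x hx]
    have hφbdd : ∀ᵐ x ∂(volume.restrict (Set.Ioi x₀)),
        ‖(P {ω | A2ClassG p (fun z => kde K (m n) (h1 n) (X n) z ω)
          (fun z => kde K n (h2 n) (Y n) z ω) x}).toReal * f x‖ ≤ f x := by
      apply Filter.Eventually.of_forall
      intro x
      have hP1 : (P {ω | A2ClassG p (fun z => kde K (m n) (h1 n) (X n) z ω)
          (fun z => kde K n (h2 n) (Y n) z ω) x}).toReal ≤ 1 := by
        have h2' := ENNReal.toReal_mono ENNReal.one_ne_top
          (prob_le_one (μ := P) (s := {ω | A2ClassG p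
            (fun z => kde K (m n) (h1 n) (X n) z ω)
            (fun z => kde K n (h2 n) (Y n) z ω) x}))
        simpa using h2'
      have hnn : 0 ≤ (P {ω | A2ClassG p (fun z => kde K (m n) (h1 n) (X n) z ω)
          (fun z => kde K n (h2 n) (Y n) z ω) x}).toReal * f x :=
        mul_nonneg ENNReal.toReal_nonneg (hf0 x)
      simp only [Real.norm_eq_abs]
      rw [abs_of_nonneg hnn]
      exact mul_le_of_le_one_left (hf0 x) hP1
    have hφint : IntegrableOn (fun x : ℝ =>
        (P {ω | A2ClassG p (fun z => kde K (m n) (h1 n) (X n) z ω)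
          (fun z => kde K n (h2 n) (Y n) z ω) x}).toReal * f x) (Set.Ioi x₀) volume :=
      Integrable.mono' hfInt.integrableOn hφae hφbdd
    -- the comparison function
    have hexp : -(α + β) < -1 := by linarith
    have hint_rpow : IntegrableOn (fun x : ℝ => x ^ (-(α + β))) (Set.Ioi y) volume :=
      integrableOn_Ioi_rpow_of_lt hexp hypos
    have hψint : IntegrableOn ((Set.Ioi y).indicator
        (fun x : ℝ => c0 * N * x ^ (-(α + β)))) (Set.Ioi x₀) volume := by
      apply Integrable.integrableOn
      exact IntegrableOn.integrable_indicator (hint_rpow.const_mul (c0 * N)) measurableSet_Ioi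
    have hcmp : ∀ x ∈ Set.Ioi x₀, (Set.Ioi y).indicator
        (fun x : ℝ => c0 * N * x ^ (-(α + β))) x ≤
        (P {ω | A2ClassG p (fun z => kde K (m n) (h1 n) (X n) z ω)
          (fun z => kde K n (h2 n) (Y n) z ω) x}).toReal * f x := by
      intro x hx
      by_cases hxy : x ∈ Set.Ioi y
      · rw [Set.indicator_of_mem hxy]
        exact hpt x (le_of_lt hxy)
      · rw [Set.indicator_of_notMem hxy]
        exact mul_nonneg ENNReal.toReal_nonneg (hf0 x)
    have hint1 := setIntegral_mono_on hψint hφint measurableSet_Ioi hcmp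
    have hψval : ∫ x in Set.Ioi x₀, (Set.Ioi y).indicator
        (fun x : ℝ => c0 * N * x ^ (-(α + β))) x = c0 * N * (y ^ (1 - (α + β)) / a) := by
      rw [integral_indicator measurableSet_Ioi,
        Measure.restrict_restrict measurableSet_Ioi,
        Set.inter_eq_self_of_subset_left (Set.Ioi_subset_Ioi hyx₀),
        integral_const_mul, integral_Ioi_rpow_of_lt hexp hypos,
        show -(α + β) + 1 = 1 - (α + β) by ring,
        show (1 : ℝ) - (α + β) = -a by rw [hadef]; ring,
        neg_div_neg_eq]
    rw [hNn]
    calc c0 / a * N * N * ((x₀ + w) ^ (1 - (α + β)))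
        = N * (c0 * N * ((x₀ + w) ^ (1 - (α + β)) / a)) := by ring
      _ = N * ∫ x in Set.Ioi x₀, (Set.Ioi y).indicator
            (fun x : ℝ => c0 * N * x ^ (-(α + β))) x := by rw [hψval, hydef]
      _ ≤ N * ∫ x in Set.Ioi x₀,
            (P {ω | A2ClassG p (fun z => kde K (m n) (h1 n) (X n) z ω)
              (fun z => kde K n (h2 n) (Y n) z ω) x}).toReal * f x :=
          mul_le_mul_of_nonneg_left hint1 hNpos.le
  have bound2 : ∀ᶠ n : ℕ in atTop, C7 * (n:ℝ) ^ e ≤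
      c0 / a * ((n:ℝ) ^ (1 - ρ)) * ((n:ℝ) ^ (1 - ρ)) *
        ((x₀ + (D * (n:ℝ) ^ (1 - ρ)) ^ α⁻¹) ^ (1 - (α + β))) := by
    filter_upwards [eventually_ge_atTop 1] with n hn
    have hn1 : (1:ℝ) ≤ (n:ℝ) := by exact_mod_cast hn
    have hnpos : (0:ℝ) < (n:ℝ) := by linarith
    set N := (n:ℝ) ^ (1 - ρ) with hNdef
    have hNpos : 0 < N := Real.rpow_pos_of_pos hnpos _
    have hN1 : 1 ≤ N := Real.one_le_rpow hn1 (by linarith)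
    have hnτ1 : 1 ≤ (n:ℝ) ^ τ := Real.one_le_rpow hn1 hτpos.le
    have hweq : (D * N) ^ α⁻¹ = D ^ α⁻¹ * (n:ℝ) ^ τ := by
      rw [Real.mul_rpow hDpos.le hNpos.le, hNdef, ← Real.rpow_mul hnpos.le, hτdef]
    set y := x₀ + (D * N) ^ α⁻¹ with hydef
    have hypos : 0 < y := by
      have : (0:ℝ) < (D * N) ^ α⁻¹ := Real.rpow_pos_of_pos (by positivity) _
      rw [hydef]; linarith
    have hyle : y ≤ C6 * (n:ℝ) ^ τ := by
      rw [hydef, hweq, hC6def]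
      have h1 : x₀ ≤ x₀ * (n:ℝ) ^ τ := le_mul_of_one_le_right hx₀pos.le hnτ1
      have h3 : (x₀ + D ^ α⁻¹) * (n:ℝ) ^ τ = x₀ * (n:ℝ) ^ τ + D ^ α⁻¹ * (n:ℝ) ^ τ := by ring
      rw [h3]
      linarith
    have hkey : (C6 * (n:ℝ) ^ τ) ^ (1 - (α + β)) ≤ y ^ (1 - (α + β)) := by
      have h1 : (1 - (α + β)) = -a := by rw [hadef]; ring
      rw [h1]
      exact HK.rpow_neg_anti hapos.le hypos hyle
    have hsplit : (C6 * (n:ℝ) ^ τ) ^ (1 - (α + β)) =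
        C6 ^ (1 - (α + β)) * (n:ℝ) ^ (τ * (1 - (α + β))) := by
      rw [Real.mul_rpow hC6pos.le (Real.rpow_pos_of_pos hnpos _).le,
        ← Real.rpow_mul hnpos.le]
    have hne : (n:ℝ) ^ e = N * N * (n:ℝ) ^ (τ * (1 - (α + β))) := by
      rw [hNdef, ← Real.rpow_add hnpos, ← Real.rpow_add hnpos, hedef]
      congr 1
      ring
    calc C7 * (n:ℝ) ^ e
        = c0 / a * N * N * (C6 ^ (1 - (α + β)) * (n:ℝ) ^ (τ * (1 - (α + β)))) := by
          rw [hC7def, hne]; ring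
      _ = c0 / a * N * N * (C6 * (n:ℝ) ^ τ) ^ (1 - (α + β)) := by rw [hsplit]
      _ ≤ c0 / a * N * N * y ^ (1 - (α + β)) := by
          have hc : 0 ≤ c0 / a * N * N := by positivity
          exact mul_le_mul_of_nonneg_left hkey hc
  have growth : Tendsto (fun n : ℕ => C7 * (n:ℝ) ^ e) atTop atTop :=
    (tendsto_const_mul_atTop_of_pos hC7pos).mpr
      ((tendsto_rpow_atTop hepos).comp tendsto_natCast_atTop_atTop)
  apply tendsto_atTop_mono' atTop _ growth
  filter_upwards [main, bound2] with n h1 h2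
  exact le_trans h2 h1
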